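/- Let q ∈ (0,1), s ∈ (0,1), and let (c_ℓ)_{ℓ=0}^L be nonnegative reals. Let φ = ∑_{ℓ=0}^L φ_ℓ in a Hilbert space with two norms ‖·‖_{−1} and ‖·‖ connected by inverse estimates ‖φ_ℓ‖_{−s+δ} ≤ C q^{ℓ(−1+s−δ)}‖φ_ℓ‖_{−1} and ‖φ_k‖_{−s−δ} ≤ C q^{k(−1+s+δ)}‖φ_k‖_{−1} for some δ with 0 < s−δ < s+δ < 1, and suppose the interpolation scalar product satisfies |⟨φ_ℓ, φ_k⟩_{−s}| ≤ ‖φ_ℓ‖_{−s+δ}‖φ_k‖_{−s−δ}. Then ‖φ‖²_{−s} = ∑_{ℓ,k} ⟨φ_ℓ,φ_k⟩_{−s} ≤ C' ∑_{ℓ=0}^L q^{2ℓ(−1+s)} ‖φ_ℓ‖²_{−1}, with C' depending only on C, q, δ. -/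

import Mathlib

/-!
Expand `‖∑ φ_ℓ‖²` into the inner products `⟪φ_ℓ, φ_k⟫` and, for `ℓ ≤ k`, bound each by the
duality estimate followed by the two inverse estimates (the `-s+δ` norm on the coarser level):
this gives `⟪φ_ℓ, φ_k⟫ ≤ C² (q^δ)^|k-ℓ| x_ℓ x_k` with `x_ℓ = q^{ℓ(-1+s)} nc(φ_ℓ)`. The
symmetric kernel `(q^δ)^|k-ℓ|` has row sums at most `2 / (1 - q^δ)`, so by the Schur test the
quadratic form is at most `2 C² / (1 - q^δ) ∑ x_ℓ²`.
-/

open Finset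

lemma sum_pow_le_of_injOn {ι : Type*} {r : ℝ} (hr0 : 0 ≤ r) (hr1 : r < 1) {s : Finset ι}
    {f : ι → ℕ} (hf : Set.InjOn f s) : ∑ i ∈ s, r ^ f i ≤ (1 - r)⁻¹ := by
  classical
  rw [← sum_image (f := fun n => r ^ n) hf, ← tsum_geometric_of_lt_one hr0 hr1]
  exact (summable_geometric_of_lt_one hr0 hr1).sum_le_tsum _ fun n _ => pow_nonneg hr0 n

lemma sum_pow_dist_le {r : ℝ} (hr0 : 0 ≤ r) (hr1 : r < 1) (s : Finset ℕ) (ℓ : ℕ) :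
    ∑ k ∈ s, r ^ Nat.dist ℓ k ≤ 2 / (1 - r) := by
  rw [← sum_filter_add_sum_filter_not s (· ≤ ℓ)]
  calc ∑ k ∈ s with k ≤ ℓ, r ^ Nat.dist ℓ k + ∑ k ∈ s with ¬k ≤ ℓ, r ^ Nat.dist ℓ k
      = ∑ k ∈ s with k ≤ ℓ, r ^ (ℓ - k) + ∑ k ∈ s with ¬k ≤ ℓ, r ^ (k - ℓ) := by
        congr 1 <;> refine sum_congr rfl fun k hk => ?_ <;> rw [mem_filter] at hk
        · rw [Nat.dist_eq_sub_of_le_right hk.2]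
        · rw [Nat.dist_eq_sub_of_le (not_le.1 hk.2).le]
    _ ≤ (1 - r)⁻¹ + (1 - r)⁻¹ := by
        gcongr <;> refine sum_pow_le_of_injOn hr0 hr1 fun a ha b hb hab => ?_ <;>
          simp only [coe_filter, Set.mem_ofPred_eq] at ha hb hab <;> omega
    _ = 2 / (1 - r) := by ring

lemma sum_sum_mul_mul_le_of_sum_le {ι : Type*} (s : Finset ι) (K : ι → ι → ℝ) (M : ℝ)
    (hK : ∀ i ∈ s, ∀ j ∈ s, 0 ≤ K i j) (hsymm : ∀ i j, K i j = K j i)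
    (hrow : ∀ i ∈ s, ∑ j ∈ s, K i j ≤ M) (x : ι → ℝ) :
    ∑ i ∈ s, ∑ j ∈ s, K i j * (x i * x j) ≤ M * ∑ i ∈ s, x i ^ 2 := by
  have hswap : ∑ i ∈ s, ∑ j ∈ s, K i j * x j ^ 2 = ∑ i ∈ s, ∑ j ∈ s, K i j * x i ^ 2 := by
    rw [sum_comm]
    simp only [hsymm _ _]
  calc ∑ i ∈ s, ∑ j ∈ s, K i j * (x i * x j)
      ≤ ∑ i ∈ s, ∑ j ∈ s, K i j * ((x i ^ 2 + x j ^ 2) / 2) := by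
        gcongr with i hi j hj
        · exact hK i hi j hj
        · nlinarith [sq_nonneg (x i - x j)]
    _ = (∑ i ∈ s, ∑ j ∈ s, K i j * x i ^ 2 + ∑ i ∈ s, ∑ j ∈ s, K i j * x j ^ 2) / 2 := by
        simp only [← sum_add_distrib, sum_div]
        ring_nf
    _ = ∑ i ∈ s, (∑ j ∈ s, K i j) * x i ^ 2 := by
        simp only [hswap, sum_mul]
        ring
    _ ≤ ∑ i ∈ s, M * x i ^ 2 := by
        gcongr with i hi
        exact hrow i hi
    _ = M * ∑ i ∈ s, x i ^ 2 := (mul_sum ..).symm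

lemma rpow_mul_sub_mul_rpow_mul_add {q : ℝ} (hq : 0 < q) (a δ : ℝ) {ℓ k : ℕ} (h : ℓ ≤ k) :
    q ^ ((ℓ : ℝ) * (a - δ)) * q ^ ((k : ℝ) * (a + δ))
      = (q ^ δ) ^ (k - ℓ) * (q ^ ((ℓ : ℝ) * a) * q ^ ((k : ℝ) * a)) := by
  rw [← Real.rpow_mul_natCast hq.le, ← Real.rpow_add hq, ← Real.rpow_add hq, ← Real.rpow_add hq]
  congr 1
  push_cast [h]
  ring

lemma mul_le_of_inverse_estimates {q a δ C α β γ γ' : ℝ} (hq : 0 < q) {ℓ k : ℕ} (h : ℓ ≤ k)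
    (hα : 0 ≤ α) (hβ : 0 ≤ β) (hαγ : α ≤ C * q ^ ((ℓ : ℝ) * (a - δ)) * γ)
    (hβγ : β ≤ C * q ^ ((k : ℝ) * (a + δ)) * γ') :
    α * β ≤ C ^ 2 * (q ^ δ) ^ (k - ℓ) * (q ^ ((ℓ : ℝ) * a) * γ * (q ^ ((k : ℝ) * a) * γ')) :=
  calc α * β ≤ (C * q ^ ((ℓ : ℝ) * (a - δ)) * γ) * (C * q ^ ((k : ℝ) * (a + δ)) * γ') :=
        mul_le_mul hαγ hβγ hβ (hα.trans hαγ)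
    _ = _ := by
        rw [mul_mul_mul_comm, mul_mul_mul_comm C, rpow_mul_sub_mul_rpow_mul_add hq a δ h]
        ring

lemma norm_sum_sq_eq_sum_sum_inner {H ι : Type*} [NormedAddCommGroup H] [InnerProductSpace ℝ H]
    (s : Finset ι) (φ : ι → H) :
    ‖∑ i ∈ s, φ i‖ ^ 2 = ∑ i ∈ s, ∑ j ∈ s, inner ℝ (φ i) (φ j) := by
  rw [← real_inner_self_eq_norm_sq, sum_inner]
  simp only [inner_sum]

theorem multilevel_splitting_stability_general
    {H : Type*} [NormedAddCommGroup H] [InnerProductSpace ℝ H]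
    (q δ s C : ℝ) (hq0 : 0 < q) (hq1 : q < 1) (hδ : 0 < δ)
    (L : ℕ) (φ : ℕ → H)
    (na nb nc : H → ℝ)
    (hna : ∀ x, 0 ≤ na x) (hnb : ∀ x, 0 ≤ nb x)
    (hainv : ∀ ℓ, na (φ ℓ) ≤ C * q ^ ((ℓ : ℝ) * (-1 + s - δ)) * nc (φ ℓ))
    (hbinv : ∀ k, nb (φ k) ≤ C * q ^ ((k : ℝ) * (-1 + s + δ)) * nc (φ k))
    (hdual : ∀ ℓ k, |inner (𝕜 := ℝ) (φ ℓ) (φ k)| ≤ na (φ ℓ) * nb (φ k)) :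
    ‖∑ ℓ ∈ Finset.range (L + 1), φ ℓ‖ ^ 2
      ≤ (2 * C ^ 2 / (1 - q ^ δ)) *
          ∑ ℓ ∈ Finset.range (L + 1), q ^ (2 * (ℓ : ℝ) * (-1 + s)) * nc (φ ℓ) ^ 2 := by
  set r := q ^ δ
  have hr0 : 0 ≤ r := Real.rpow_nonneg hq0.le δ
  have hr1 : r < 1 := Real.rpow_lt_one hq0.le hq1 hδ
  set x : ℕ → ℝ := fun ℓ => q ^ ((ℓ : ℝ) * (-1 + s)) * nc (φ ℓ)
  have hle : ∀ ℓ k, ℓ ≤ k → inner ℝ (φ ℓ) (φ k) ≤ C ^ 2 * r ^ (k - ℓ) * (x ℓ * x k) :=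
    fun ℓ k h => (le_abs_self _).trans <| (hdual ℓ k).trans <|
      mul_le_of_inverse_estimates hq0 h (hna _) (hnb _) (hainv ℓ) (hbinv k)
  have hpair : ∀ ℓ k, inner ℝ (φ ℓ) (φ k) ≤ C ^ 2 * r ^ Nat.dist ℓ k * (x ℓ * x k) := by
    intro ℓ k
    rcases le_total ℓ k with h | h
    · rw [Nat.dist_eq_sub_of_le h]
      exact hle ℓ k h
    · rw [Nat.dist_eq_sub_of_le_right h, real_inner_comm, mul_comm (x ℓ)]
      exact hle k ℓ h
  calc ‖∑ ℓ ∈ range (L + 1), φ ℓ‖ ^ 2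
      = ∑ ℓ ∈ range (L + 1), ∑ k ∈ range (L + 1), inner ℝ (φ ℓ) (φ k) :=
        norm_sum_sq_eq_sum_sum_inner _ _
    _ ≤ ∑ ℓ ∈ range (L + 1), ∑ k ∈ range (L + 1), C ^ 2 * r ^ Nat.dist ℓ k * (x ℓ * x k) :=
        sum_le_sum fun ℓ _ => sum_le_sum fun k _ => hpair ℓ k
    _ ≤ C ^ 2 * (2 / (1 - r)) * ∑ ℓ ∈ range (L + 1), x ℓ ^ 2 :=
        sum_sum_mul_mul_le_of_sum_le _ _ _ (fun _ _ _ _ => by positivity)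
          (fun ℓ k => by rw [Nat.dist_comm])
          (fun ℓ _ => by rw [← mul_sum]; gcongr; exact sum_pow_dist_le hr0 hr1 _ ℓ) x
    _ = _ := by
        rw [mul_div_assoc', ← mul_comm 2]
        congr 1
        refine sum_congr rfl fun ℓ _ => ?_
        rw [mul_pow, ← Real.rpow_mul_natCast hq0.le]
        push_cast
        ring_nf

/-- Abstract stability of multilevel splittings: if the levelwise contributions `φ_ℓ`
satisfy inverse estimates in the intermediate norms `na = ‖·‖_{-s+δ}`, `nb = ‖·‖_{-s-δ}`
against `nc = ‖·‖_{-1}`, and the `-s` inner product satisfies the mixed duality bound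
`|⟨φ_ℓ, φ_k⟩_{-s}| ≤ na(φ_ℓ) nb(φ_k)`, then
`‖∑ φ_ℓ‖²_{-s} ≤ C' ∑ q^{2ℓ(-1+s)} nc(φ_ℓ)²` with `C' = 2C²/(1-q^δ)`. -/
theorem multilevel_splitting_stability
    {H : Type*} [NormedAddCommGroup H] [InnerProductSpace ℝ H]
    (q δ s C : ℝ) (hq0 : 0 < q) (hq1 : q < 1) (hδ : 0 < δ) (hC : 0 < C)
    (hs0 : 0 < s - δ) (hs1 : s + δ < 1)
    (L : ℕ) (φ : ℕ → H)
    (na nb nc : H → ℝ)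
    (hna : ∀ x, 0 ≤ na x) (hnb : ∀ x, 0 ≤ nb x) (hnc : ∀ x, 0 ≤ nc x)
    (hainv : ∀ ℓ, na (φ ℓ) ≤ C * q ^ ((ℓ : ℝ) * (-1 + s - δ)) * nc (φ ℓ))
    (hbinv : ∀ k, nb (φ k) ≤ C * q ^ ((k : ℝ) * (-1 + s + δ)) * nc (φ k))
    (hdual : ∀ ℓ k, |inner (𝕜 := ℝ) (φ ℓ) (φ k)| ≤ na (φ ℓ) * nb (φ k)) :
    ‖∑ ℓ ∈ Finset.range (L + 1), φ ℓ‖ ^ 2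
      ≤ (2 * C ^ 2 / (1 - q ^ δ)) *
          ∑ ℓ ∈ Finset.range (L + 1), q ^ (2 * (ℓ : ℝ) * (-1 + s)) * nc (φ ℓ) ^ 2 :=
  multilevel_splitting_stability_general q δ s C hq0 hq1 hδ L φ na nb nc hna hnb hainv hbinv hdual
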